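/- arXiv:2605.11466 — 2 statements merged into one kernel-verified Lean document; each statement's English description precedes it below -/
import Mathlib

section
/- The circulant graphs C₃₂({1,10,15}) and C₃₂({7,9,10}) are isomorphic as simple graphs, but they are not Adám isomorphic: for every unit x of ℤ/32ℤ, x·({1,10,15} ∪ -{1,10,15}) ≠ {7,9,10} ∪ -{7,9,10} as subsets of ℤ/32ℤ. -/
/-!
Shifting the odd vertices of `ℤ/32ℤ` by `8` fixes differences between vertices of equal parity and
moves the odd differences by `±8`; it therefore carries `{±1, ±15}` onto `{±7, ±9}` and keeps `±10`,
which makes it an isomorphism `C₃₂(1, 10, 15) ≅ C₃₂(7, 9, 10)`. No unit `x` is an Ádám isomorphism,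
because `x = x·1` and `10x` would both have to lie in `{±7, ±9, ±10}`, while `10y` lies outside
that set for every `y` in it.
-/

open Pointwise

/-- The circulant graph `Cₙ(R)`: vertices are `ZMod n`, and distinct `u v` are
adjacent iff `u - v ∈ R` or `v - u ∈ R`. -/
def circulantGraph (n : ℕ) (R : Set (ZMod n)) : SimpleGraph (ZMod n) where
  Adj u v := u ≠ v ∧ (u - v ∈ R ∨ v - u ∈ R)
  symm := ⟨fun u v h => ⟨h.1.symm, h.2.symm⟩⟩
  loopless := ⟨fun u h => h.1 rfl⟩

theorem Set.neg_mem_union_neg_iff {G : Type*} [InvolutiveNeg G] {A : Set G} {x : G} :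
    -x ∈ A ∪ -A ↔ x ∈ A ∪ -A := by
  simp only [Set.mem_union, Set.mem_neg, neg_neg, or_comm]

theorem Set.union_neg_insert_three {G : Type*} [InvolutiveNeg G] (a b c : G) :
    ({a, b, c} : Set G) ∪ -{a, b, c} = {a, b, c, -a, -b, -c} := by
  simp only [Set.neg_insert, Set.neg_singleton, Set.insert_union, Set.singleton_union]

section ShiftOnOdd

variable {G : Type*} [AddCommGroup G] (π : G →+ ZMod 2) {m : G} (hm : π m = 0)

def shiftOnOdd : Equiv.Perm G where
  toFun v := if π v = 1 then v + m else v
  invFun v := if π v = 1 then v - m else v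
  left_inv v := by by_cases h : π v = 1 <;> simp [h, hm]
  right_inv v := by by_cases h : π v = 1 <;> simp [h, hm]

theorem shiftOnOdd_apply (v : G) : shiftOnOdd π hm v = if π v = 1 then v + m else v := rfl

end ShiftOnOdd

namespace circulantGraph

variable {n : ℕ} {R S : Set (ZMod n)}

theorem adj_iff {u v : ZMod n} : (circulantGraph n R).Adj u v ↔ u ≠ v ∧ u - v ∈ R ∪ -R := by
  rw [Set.mem_union, Set.mem_neg, neg_sub]
  rfl

def isoOfSubMem (e : ZMod n ≃ ZMod n) (he : ∀ u v, e u - e v ∈ S ∪ -S ↔ u - v ∈ R ∪ -R) :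
    circulantGraph n R ≃g circulantGraph n S where
  toEquiv := e
  map_rel_iff' {u v} := by simp only [adj_iff, ne_eq, e.apply_eq_iff_eq, he]

theorem nonempty_iso_of_shiftOnOdd (π : ZMod n →+ ZMod 2) {m : ZMod n} (hm : π m = 0)
    (heven : ∀ d, π d = 0 → (d ∈ S ∪ -S ↔ d ∈ R ∪ -R))
    (hodd : ∀ d, π d = 1 → (d + m ∈ S ∪ -S ↔ d ∈ R ∪ -R)) :
    Nonempty (circulantGraph n R ≃g circulantGraph n S) := by
  refine ⟨isoOfSubMem (shiftOnOdd π hm) fun u v => ?_⟩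
  have hdiff : π (u - v) = π u - π v := map_sub π u v
  have parity : ∀ a : ZMod 2, a = 0 ∨ a = 1 := by decide
  simp only [shiftOnOdd_apply]
  rcases parity (π u) with hu | hu <;> rcases parity (π v) with hv | hv <;>
    simp only [hu, hv, zero_ne_one, if_true, if_false] at hdiff ⊢
  · exact heven _ (by simpa using hdiff)
  · rw [← Set.neg_mem_union_neg_iff (x := u - v), neg_sub,
      ← hodd _ (by rw [map_sub, hu, hv]; decide), ← Set.neg_mem_union_neg_iff (x := v - u + m)]
    congr! 1; abel
  · rw [← hodd _ (by rw [hdiff]; decide)]; congr! 1; abel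
  · rw [add_sub_add_right_eq_sub]; exact heven _ (by rw [hdiff]; decide)

end circulantGraph

theorem stmt2 :
    Nonempty (circulantGraph 32 ({1,10,15} : Set (ZMod 32)) ≃g circulantGraph 32 ({7,9,10} : Set (ZMod 32))) ∧
    ∀ x : (ZMod 32)ˣ,
      (fun r => (x : ZMod 32) * r) '' (({1,10,15} : Set (ZMod 32)) ∪ -({1,10,15} : Set (ZMod 32))) ≠ ({7,9,10} : Set (ZMod 32)) ∪ -({7,9,10} : Set (ZMod 32)) := by
  refine ⟨?_, fun x h => ?_⟩
  · refine circulantGraph.nonempty_iso_of_shiftOnOdd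
      (ZMod.castHom (by norm_num : 2 ∣ 32) (ZMod 2)).toAddMonoidHom (m := 8) (by decide) ?_ ?_ <;>
    simp only [Set.union_neg_insert_three] <;> decide
  · simp only [Set.union_neg_insert_three] at h
    have h1 : (x : ZMod 32) * 1 ∈ ({7, 9, 10, -7, -9, -10} : Set (ZMod 32)) := h ▸ ⟨1, by simp, rfl⟩
    have h10 : (x : ZMod 32) * 10 ∈ ({7, 9, 10, -7, -9, -10} : Set (ZMod 32)) := h ▸ ⟨10, by simp, rfl⟩
    generalize (x : ZMod 32) = y at h1 h10
    revert y
    decide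
end

section
/- The circulant graphs C₃₂({1,14,15}) and C₃₂({7,9,14}) are isomorphic as simple graphs, but they are not Adám isomorphic: for every unit x of ℤ/32ℤ, x·({1,14,15} ∪ -{1,14,15}) ≠ {7,9,14} ∪ -{7,9,14} as subsets of ℤ/32ℤ. -/
/-!
An isomorphism `C₃₂(1,14,15) ≅ C₃₂(7,9,14)` is given by negating even vertices and sending odd
`v` to `8 - v`. It negates the difference of two vertices of equal parity, which fixes `±14`, and
sends the difference `d` of an even and an odd vertex to `-d - 8`, which maps `±1, ±15` onto
`±9, ±7`.

No multiplier `x` can work: `1` and `14` lie in `±{1,14,15}`, so both `x` and `14 x` would lie in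
`±{7,9,14}`, and no element `y` of `±{7,9,14}` has `14 y` in it as well.
-/

open Pointwise

theorem circulantGraph_adj_iff {n : ℕ} {R : Set (ZMod n)} {u v : ZMod n} :
    (circulantGraph n R).Adj u v ↔ u ≠ v ∧ u - v ∈ R ∪ -R := by
  simp only [circulantGraph, Set.mem_union, Set.mem_neg, neg_sub]

def circulantGraph.isoOfSubMemIff {n : ℕ} {R S : Set (ZMod n)} (e : ZMod n ≃ ZMod n)
    (he : ∀ u v, e u - e v ∈ S ∪ -S ↔ u - v ∈ R ∪ -R) :
    circulantGraph n R ≃g circulantGraph n S where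
  toEquiv := e
  map_rel_iff' {u v} := by
    simp only [circulantGraph_adj_iff, he, ne_eq, e.apply_eq_iff_eq]

def twistedNeg (x : ZMod 32) : ZMod 32 := if Even x.val then -x else 8 - x

theorem twistedNeg_involutive : Function.Involutive twistedNeg := by
  unfold Function.Involutive
  decide

theorem twistedNeg_sub_mem_iff (u v : ZMod 32) :
    twistedNeg u - twistedNeg v ∈ ({7,9,14} : Set (ZMod 32)) ∪ -{7,9,14} ↔
      u - v ∈ ({1,14,15} : Set (ZMod 32)) ∪ -{1,14,15} := by
  simp only [Set.mem_union, Set.mem_neg, Set.mem_insert_iff, Set.mem_singleton_iff]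
  revert u v
  decide

theorem mul_fourteen_not_mem {y : ZMod 32} (hy : y ∈ ({7,9,14} : Set (ZMod 32)) ∪ -{7,9,14}) :
    y * 14 ∉ ({7,9,14} : Set (ZMod 32)) ∪ -{7,9,14} := by
  simp only [Set.mem_union, Set.mem_neg, Set.mem_insert_iff, Set.mem_singleton_iff] at hy ⊢
  revert y
  decide

theorem stmt3 :
    Nonempty (circulantGraph 32 ({1,14,15} : Set (ZMod 32)) ≃g circulantGraph 32 ({7,9,14} : Set (ZMod 32))) ∧
    ∀ x : (ZMod 32)ˣ,
      (fun r => (x : ZMod 32) * r) '' (({1,14,15} : Set (ZMod 32)) ∪ -({1,14,15} : Set (ZMod 32))) ≠ ({7,9,14} : Set (ZMod 32)) ∪ -({7,9,14} : Set (ZMod 32)) := by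
  refine ⟨⟨circulantGraph.isoOfSubMemIff twistedNeg_involutive.toPerm twistedNeg_sub_mem_iff⟩,
    fun x h => ?_⟩
  have hx : (x : ZMod 32) * 1 ∈ ({7,9,14} : Set (ZMod 32)) ∪ -{7,9,14} :=
    h ▸ Set.mem_image_of_mem _ (by simp)
  have h14 : (x : ZMod 32) * 14 ∈ ({7,9,14} : Set (ZMod 32)) ∪ -{7,9,14} :=
    h ▸ Set.mem_image_of_mem _ (by simp)
  exact mul_fourteen_not_mem (by rwa [mul_one] at hx) h14
end
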